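/- For every n ≥ 1, the number of words L ∈ 𝓛_n with no P1-match (equivalently, lattice paths from (0,0) to (n,n) that stay weakly above the subdiagonal y = x − 1) equals the Catalan number C_{n+1} = (1/(n+2))·binom(2n+2, n+1). -/

import Mathlib

/-!
Words over the alphabet {E, N} are encoded as `List Bool`,
with `true` representing an east step `E` and `false` a north step `N`.
The word `w = w_1 ⋯ w_{2n}` corresponds to the lattice path from `(0,0)` to
`(n,n)` whose `j`-th step is east if `w_j = true` and north if `w_j = false`.
-/

/-- `w ∈ 𝓛_n`: the word `w` has exactly `n` `E`'s and `n` `N`'s. -/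
def memL (n : ℕ) (w : List Bool) : Prop :=
  w.count true = n ∧ w.count false = n

/-- The (0-indexed, increasing) list of positions at which the letter `b` occurs in `w`. -/
def occPos (w : List Bool) (b : Bool) : List ℕ :=
  (List.range w.length).filter (fun j => w.getD j (!b) == b)

/-- `ps_w({i, i+1})` (with `i` 1-indexed): the length-4 word obtained from `w` by
deleting, for each `j ∉ {i, i+1}`, the `j`-th occurrence of `E` and the `j`-th
occurrence of `N` (counted from left to right); i.e. the word formed by the
`i`-th and `(i+1)`-th occurrences of `E` and of `N`, read in their original order. -/
def pairedSubword (w : List Bool) (i : ℕ) : List Bool :=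
  let keep : List ℕ := [(occPos w true).getD (i-1) 0, (occPos w true).getD i 0,
                        (occPos w false).getD (i-1) 0, (occPos w false).getD i 0]
  ((List.range w.length).filter (fun j => keep.contains j)).map (fun j => w.getD j true)

/-- `P`-mch(w): the number of paired steps `i` with `1 ≤ i ≤ n-1` at which the
paired pattern `P` matches in `w ∈ 𝓛_n`. -/
def pmch (n : ℕ) (P w : List Bool) : ℕ :=
  ((Finset.Icc 1 (n-1)).filter (fun i => pairedSubword w i = P)).card

def P1 : List Bool := [true, true, false, false]   -- EENN
def P2 : List Bool := [true, false, true, false]   -- ENEN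
def P3 : List Bool := [false, true, true, false]   -- NEEN
def P4 : List Bool := [true, false, false, true]   -- ENNE
def P5 : List Bool := [false, true, false, true]   -- NENE
def P6 : List Bool := [false, false, true, true]   -- NNEE

/-!
The pattern `EENN` occurs at paired step `i` exactly when the `(i + 1)`-th `E` comes before
the `i`-th `N`. So a word has a `P1`-match iff some prefix contains at least two more `E`'s
than `N`'s, i.e. iff its path dips below the line `y = x - 1`. Reading `N` as an up step and `E`
as a down step, the paths staying weakly above that line are exactly the words `w` for which
`U w D` is a Dyck word, and these Dyck words, of semilength `n + 1`, are counted by `C_{n+1}`.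
-/

lemma occPos_cons (a b : Bool) (w : List Bool) :
    occPos (a :: w) b = (if a = b then [0] else []) ++ (occPos w b).map (· + 1) := by
  unfold occPos
  rw [List.length_cons, List.range_succ_eq_map, List.filter_cons, List.filter_map]
  by_cases hab : a = b <;> simp [hab, Function.comp_def]

lemma length_occPos (w : List Bool) (b : Bool) : (occPos w b).length = w.count b := by
  induction w with
  | nil => rfl
  | cons a w ih => by_cases h : a = b <;> simp [occPos_cons, h, ih]

lemma mem_occPos_iff {w : List Bool} {b : Bool} {j : ℕ} (c : Bool) :
    j ∈ occPos w b ↔ j < w.length ∧ w.getD j c = b := by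
  simp only [occPos, List.mem_filter, List.mem_range, beq_iff_eq, and_congr_right_iff]
  intro hj
  simp [List.getElem?_eq_getElem hj]

lemma getD_occPos_mem {w : List Bool} {b : Bool} {i : ℕ} (hi : i < w.count b) :
    (occPos w b).getD i 0 ∈ occPos w b := by
  rw [← length_occPos] at hi
  rw [List.getD_eq_getElem _ _ hi]
  exact List.getElem_mem hi

lemma getD_occPos_lt_getD_occPos {w : List Bool} {b : Bool} {i j : ℕ} (hij : i < j)
    (hj : j < w.count b) : (occPos w b).getD i 0 < (occPos w b).getD j 0 := by
  rw [← length_occPos] at hj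
  rw [List.getD_eq_getElem _ _ (hij.trans hj), List.getD_eq_getElem _ _ hj]
  exact List.pairwise_iff_getElem.mp (List.pairwise_lt_range.filter _) _ _ _ _ hij

lemma getD_occPos_lt_iff {w : List Bool} {b : Bool} {i : ℕ} (hi : i < w.count b) (k : ℕ) :
    (occPos w b).getD i 0 < k ↔ i < (w.take k).count b := by
  induction w generalizing i k with
  | nil => simp at hi
  | cons a w ih =>
    cases k with
    | zero => simp
    | succ k =>
      rw [List.take_succ_cons, occPos_cons]
      by_cases hab : a = b
      · subst hab
        cases i with
        | zero => simp
        | succ i =>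
          have hi' : i < (occPos w a).length := by simp [length_occPos] at hi ⊢; omega
          simp [List.getD_eq_getElem?_getD, hi', ← ih (by simpa using hi)]
      · have hi' : i < (occPos w b).length := by simp [length_occPos, hab] at hi ⊢; omega
        simp [List.getD_eq_getElem?_getD, hi', hab, ← ih (by simpa [hab] using hi)]

lemma filter_range_contains_perm {m : ℕ} {l : List ℕ} (hl : l.Nodup) (hlt : ∀ j ∈ l, j < m) :
    ((List.range m).filter (fun j => l.contains j)).Perm l := by
  rw [List.perm_ext_iff_of_nodup (List.nodup_range.filter _) hl]
  intro j
  simpa using hlt j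

lemma pairwise_filter_range_iff {m : ℕ} {p : ℕ → Bool} {R : ℕ → ℕ → Prop} :
    ((List.range m).filter p).Pairwise R ↔ ∀ i, p i → ∀ j, p j → i < j → j < m → R i j := by
  rw [List.pairwise_filter, List.pairwise_iff_getElem]
  simp only [List.length_range, List.getElem_range]
  exact ⟨fun h i hi j hj hij hjm => h i j (hij.trans hjm) hjm hij hi hj,
    fun h i j _ hj hij hi hj' => h i hi j hj' hij hj⟩

lemma eq_P1_iff_pairwise {v : List Bool} (hv : v.Perm P1) : v = P1 ↔ v.Pairwise (· ≥ ·) :=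
  ⟨fun h => h ▸ by decide, fun h => hv.eq_of_pairwise' h (by decide)⟩

lemma subword_eq_P1_iff {w : List Bool} {e₁ e₂ f₁ f₂ : ℕ} (he : e₁ < e₂) (hf : f₁ < f₂)
    (he₂ : e₂ < w.length) (hf₂ : f₂ < w.length)
    (hwe₁ : w.getD e₁ true = true) (hwe₂ : w.getD e₂ true = true)
    (hwf₁ : w.getD f₁ true = false) (hwf₂ : w.getD f₂ true = false) :
    ((List.range w.length).filter (fun j => [e₁, e₂, f₁, f₂].contains j)).map (w.getD · true) = P1
      ↔ e₂ < f₁ := by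
  have hne : ∀ e ∈ [e₁, e₂], ∀ f ∈ [f₁, f₂], e ≠ f := by
    rintro e he f hf rfl
    simp only [List.mem_cons, List.not_mem_nil, or_false] at he hf
    rcases he with rfl | rfl <;> rcases hf with rfl | rfl <;> simp_all
  simp only [List.mem_cons, List.not_mem_nil, or_false, ne_eq, forall_eq_or_imp, forall_eq] at hne
  have hperm := (filter_range_contains_perm (m := w.length) (l := [e₁, e₂, f₁, f₂])
    (by simp; omega) (by simp; omega)).map (w.getD · true)
  simp only [List.map_cons, List.map_nil, hwe₁, hwe₂, hwf₁, hwf₂] at hperm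
  rw [eq_P1_iff_pairwise hperm, List.pairwise_map, pairwise_filter_range_iff]
  simp only [List.contains_cons, List.contains_nil, Bool.or_false, Bool.or_eq_true, beq_iff_eq,
    forall_eq_or_imp, forall_eq, hwe₁, hwe₂, hwf₁, hwf₂]
  simp +decide
  omega

lemma pairedSubword_succ_eq_P1_iff {w : List Bool} {i : ℕ} (hE : i + 1 < w.count true)
    (hN : i + 1 < w.count false) :
    pairedSubword w (i + 1) = P1 ↔ (occPos w true).getD (i + 1) 0 < (occPos w false).getD i 0 := by
  obtain ⟨-, hwe₁⟩ := (mem_occPos_iff true).mp (getD_occPos_mem (i.lt_succ_self.trans hE))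
  obtain ⟨he₂, hwe₂⟩ := (mem_occPos_iff true).mp (getD_occPos_mem hE)
  obtain ⟨-, hwf₁⟩ := (mem_occPos_iff true).mp (getD_occPos_mem (i.lt_succ_self.trans hN))
  obtain ⟨hf₂, hwf₂⟩ := (mem_occPos_iff true).mp (getD_occPos_mem hN)
  exact subword_eq_P1_iff (getD_occPos_lt_getD_occPos i.lt_succ_self hE)
    (getD_occPos_lt_getD_occPos i.lt_succ_self hN) he₂ hf₂ hwe₁ hwe₂ hwf₁ hwf₂

def WeaklyAboveSubdiagonal (w : List Bool) : Prop :=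
  ∀ k, (w.take k).count true ≤ (w.take k).count false + 1

lemma pmch_P1_eq_zero_iff {n : ℕ} {w : List Bool} (hw : memL n w) :
    pmch n P1 w = 0 ↔ WeaklyAboveSubdiagonal w := by
  obtain ⟨hE, hN⟩ := hw
  rw [pmch, Finset.card_eq_zero, Finset.filter_eq_empty_iff]
  constructor
  · intro h k
    by_contra! hk
    -- a prefix with `a` `N`s and at least `a + 2` `E`s gives a match at paired step `a + 1`
    set a := (w.take k).count false
    have hn : (w.take k).count true ≤ n := hE ▸ (List.take_sublist k w).count_le true
    refine h (x := a + 1) (Finset.mem_Icc.mpr ⟨by omega, by omega⟩) ?_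
    rw [pairedSubword_succ_eq_P1_iff (by omega) (by omega)]
    have he := (getD_occPos_lt_iff (by omega) k).mpr hk
    have hf := (getD_occPos_lt_iff (b := false) (i := a) (by omega) k).not.mpr (lt_irrefl a)
    omega
  · rintro h i hi hP
    obtain ⟨hi₁, hi₂⟩ := Finset.mem_Icc.mp hi
    obtain ⟨i, rfl⟩ : ∃ j, i = j + 1 := ⟨i - 1, by omega⟩
    rw [pairedSubword_succ_eq_P1_iff (by omega) (by omega)] at hP
    -- the prefix before the `(i + 1)`-th `N` has `i` `N`s but at least `i + 2` `E`s
    set f := (occPos w false).getD i 0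
    have he := (getD_occPos_lt_iff (by omega) f).mp hP
    have hf := (getD_occPos_lt_iff (by omega) f).not.mp (lt_irrefl f)
    have := h f
    omega

open DyckStep

lemma forall_count_take_cons_U_append_D_iff {m : List DyckStep} (hm : m.count U = m.count D) :
    (∀ i, ((U :: m ++ [D]).take i).count D ≤ ((U :: m ++ [D]).take i).count U) ↔
      ∀ k, (m.take k).count D ≤ (m.take k).count U + 1 := by
  have hU (j : ℕ) : ([D].take j).count U = 0 :=
    List.count_eq_zero_of_not_mem fun h => by simpa using List.mem_of_mem_take h
  constructor
  · intro h k
    have := h (k + 1)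
    simp only [List.cons_append, List.take_succ_cons, List.count_cons_self,
      List.count_cons_of_ne (by decide : U ≠ D), List.take_append, List.count_append, hU] at this
    omega
  · rintro h (_ | k)
    · simp
    simp only [List.cons_append, List.take_succ_cons, List.count_cons_self,
      List.count_cons_of_ne (by decide : U ≠ D), List.take_append, List.count_append, hU]
    rcases le_or_gt k m.length with hk | hk
    · simpa [Nat.sub_eq_zero_of_le hk] using h k
    · have : ([D].take (k - m.length)).count D ≤ 1 := List.count_le_length.trans (by simp)
      rw [List.take_of_length_le hk.le]
      omega

def stepEquiv : Bool ≃ DyckStep where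
  toFun b := if b then D else U
  invFun s := s == D
  left_inv b := by cases b <;> rfl
  right_inv s := by cases s <;> rfl

lemma count_D_map_stepEquiv (w : List Bool) : (w.map stepEquiv).count D = w.count true :=
  List.count_map_of_injective _ _ stepEquiv.injective true

lemma count_U_map_stepEquiv (w : List Bool) : (w.map stepEquiv).count U = w.count false :=
  List.count_map_of_injective _ _ stepEquiv.injective false

lemma memL_and_weaklyAboveSubdiagonal_iff {n : ℕ} {w : List Bool} :
    memL n w ∧ WeaklyAboveSubdiagonal w ↔
      (U :: w.map stepEquiv ++ [D]).count U = n + 1 ∧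
      (U :: w.map stepEquiv ++ [D]).count D = n + 1 ∧
      ∀ i, ((U :: w.map stepEquiv ++ [D]).take i).count D ≤
        ((U :: w.map stepEquiv ++ [D]).take i).count U := by
  have hweak : WeaklyAboveSubdiagonal w ↔
      ∀ k, ((w.map stepEquiv).take k).count D ≤ ((w.map stepEquiv).take k).count U + 1 := by
    simp only [← List.map_take, count_D_map_stepEquiv, count_U_map_stepEquiv,
      WeaklyAboveSubdiagonal]
  have hcU : (U :: w.map stepEquiv ++ [D]).count U = w.count false + 1 := by
    simp [count_U_map_stepEquiv]
  have hcD : (U :: w.map stepEquiv ++ [D]).count D = w.count true + 1 := by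
    simp [count_D_map_stepEquiv]
  rw [hcU, hcD, Nat.add_right_cancel_iff, Nat.add_right_cancel_iff, hweak]
  constructor
  · rintro ⟨⟨ht, hf⟩, hw⟩
    refine ⟨hf, ht, (forall_count_take_cons_U_append_D_iff ?_).mpr hw⟩
    rw [count_D_map_stepEquiv, count_U_map_stepEquiv, ht, hf]
  · rintro ⟨hf, ht, hpre⟩
    refine ⟨⟨ht, hf⟩, (forall_count_take_cons_U_append_D_iff ?_).mp hpre⟩
    rw [count_D_map_stepEquiv, count_U_map_stepEquiv, ht, hf]

lemma DyckWord.ne_zero_of_semilength_eq_succ {p : DyckWord} {n : ℕ} (h : p.semilength = n + 1) :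
    p ≠ 0 := by
  rintro rfl
  simp at h

def subdiagonalPaths (n : ℕ) : Set (List Bool) := {w | memL n w ∧ WeaklyAboveSubdiagonal w}

def subdiagonalPathsEquivDyckWord (n : ℕ) :
    subdiagonalPaths n ≃ {p : DyckWord // p.semilength = n + 1} where
  toFun w :=
    have h := memL_and_weaklyAboveSubdiagonal_iff.mp w.2
    ⟨⟨U :: w.1.map stepEquiv ++ [D], h.1.trans h.2.1.symm, h.2.2⟩, h.1⟩
  invFun p := ⟨p.1.toList.dropLast.tail.map stepEquiv.symm, by
    apply memL_and_weaklyAboveSubdiagonal_iff.mpr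
    rw [List.map_map, Equiv.self_comp_symm, List.map_id,
      DyckWord.cons_tail_dropLast_concat (DyckWord.ne_zero_of_semilength_eq_succ p.2)]
    exact ⟨p.2, p.1.count_U_eq_count_D ▸ p.2, p.1.count_D_le_count_U⟩⟩
  left_inv w := Subtype.ext <| by
    simp only [List.dropLast_concat, List.tail_cons, List.map_map, Equiv.symm_comp_self,
      List.map_id]
  right_inv p := Subtype.ext <| DyckWord.ext <| by
    simpa using DyckWord.cons_tail_dropLast_concat (DyckWord.ne_zero_of_semilength_eq_succ p.2)

theorem count_P1_avoiding_eq_catalan_general (n : ℕ) :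
    {w : List Bool | memL n w ∧ pmch n P1 w = 0}.ncard
      = (2*n+2).choose (n+1) / (n+2) := by
  have hset : {w : List Bool | memL n w ∧ pmch n P1 w = 0} = subdiagonalPaths n :=
    Set.ext fun w => and_congr_right pmch_P1_eq_zero_iff
  rw [hset, ← Nat.card_coe_set_eq, Nat.card_congr (subdiagonalPathsEquivDyckWord n),
    Nat.card_eq_fintype_card, DyckWord.card_dyckWord_semilength_eq_catalan,
    catalan_eq_centralBinom_div, Nat.centralBinom, mul_add, mul_one]

theorem count_P1_avoiding_eq_catalan (n : ℕ) (hn : 1 ≤ n) :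
    {w : List Bool | memL n w ∧ pmch n P1 w = 0}.ncard
      = (2*n+2).choose (n+1) / (n+2) :=
  count_P1_avoiding_eq_catalan_general n
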